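/- Monotonicity of batch-constrained soft policy iteration (first part of Theorem 1): let (π^k)_{k∈ℕ} be a sequence of policies such that for every k, the policy π^{k+1} maximizes the improvement objective of π^k at every state, i.e., for every state s and every policy π̃, J_{π^k}(π^{k+1}, s) ≥ J_{π^k}(π̃, s). Then for every k and every state-action pair (s,a), q^d_{π^{k+1}}(s,a) ≥ q^d_{π^k}(s,a). -/

import Mathlib

open Finset Filter Topology

def IsPolicy {S A : Type*} [Fintype A] (pi : S → A → ℝ) : Prop :=
  (∀ s a, 0 ≤ pi s a) ∧ (∀ s, ∑ a, pi s a = 1)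

def IsKernel {S A : Type*} [Fintype S] (p : S → A → S → ℝ) : Prop :=
  (∀ s a s', 0 ≤ p s a s') ∧ (∀ s a, ∑ s', p s a s' = 1)

noncomputable def klPen {S A : Type*} [Fintype A]
    (πb π : S → A → ℝ) (s : S) : ℝ :=
  ∑ a, π s a * Real.log (π s a / πb s a)

noncomputable def bellman {S A : Type*} [Fintype S] [Fintype A]
    (p : S → A → S → ℝ) (r : S → A → ℝ) (γ τ : ℝ) (πb π : S → A → ℝ)
    (q : S × A → ℝ) : S × A → ℝ :=
  fun sa => r sa.1 sa.2 + γ * ∑ s', p sa.1 sa.2 s' *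
    ((∑ a', π s' a' * q (s', a')) - τ * klPen πb π s')

noncomputable def supNorm {X : Type*} [Fintype X] [Nonempty X] (f : X → ℝ) : ℝ :=
  Finset.univ.sup' Finset.univ_nonempty (fun x => |f x|)

noncomputable def Jobj {S A : Type*} [Fintype A]
    (τ : ℝ) (πb : S → A → ℝ) (qd : S × A → ℝ) (πt : S → A → ℝ) (s : S) : ℝ :=
  (∑ a, πt s a * qd (s, a)) - τ * klPen πb πt s

/-!
Policy improvement at every state gives `q_k ≤ T^{π_{k+1}} q_k`, while `q_{k+1}` is the fixed
point of `T^{π_{k+1}}`. Since `T^{π_{k+1}} q - T^{π_{k+1}} q' = γ P (q - q')` for a stochastic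
state-action matrix `P`, the gap `g = q_k - q_{k+1}` satisfies `g ≤ γ P g`; evaluated at a
maximiser of `g` this reads `max g ≤ γ max g`, so `g ≤ 0` because `γ < 1`.
-/

theorem le_zero_of_le_mul_stochastic_avg {X : Type*} [Fintype X] {w : X → X → ℝ}
    (hw_nonneg : ∀ x y, 0 ≤ w x y) (hw_sum : ∀ x, ∑ y, w x y = 1)
    {γ : ℝ} (hγ0 : 0 ≤ γ) (hγ1 : γ < 1) {g : X → ℝ}
    (hg : ∀ x, g x ≤ γ * ∑ y, w x y * g y) (x : X) : g x ≤ 0 := by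
  have : Nonempty X := ⟨x⟩
  obtain ⟨m, hm⟩ := Finite.exists_max g
  have havg : ∑ y, w m y * g y ≤ g m :=
    calc ∑ y, w m y * g y ≤ ∑ y, w m y * g m := by gcongr with y; exacts [hw_nonneg m y, hm y]
      _ = g m := by rw [← Finset.sum_mul, hw_sum, one_mul]
  have hgm : g m ≤ γ * g m := (hg m).trans (mul_le_mul_of_nonneg_left havg hγ0)
  nlinarith [hm x]

section Bellman

variable {S A : Type*} [Fintype S] [Fintype A]

noncomputable def stateActionKernel (p : S → A → S → ℝ) (π : S → A → ℝ) (sa sa' : S × A) : ℝ :=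
  p sa.1 sa.2 sa'.1 * π sa'.1 sa'.2

theorem stateActionKernel_nonneg {p : S → A → S → ℝ} {π : S → A → ℝ} (hp : IsKernel p)
    (hπ : IsPolicy π) (sa sa' : S × A) : 0 ≤ stateActionKernel p π sa sa' :=
  mul_nonneg (hp.1 _ _ _) (hπ.1 _ _)

theorem sum_stateActionKernel {p : S → A → S → ℝ} {π : S → A → ℝ} (hp : IsKernel p)
    (hπ : IsPolicy π) (sa : S × A) : ∑ sa', stateActionKernel p π sa sa' = 1 := by
  simp only [stateActionKernel, Fintype.sum_prod_type, ← Finset.mul_sum, hπ.2, mul_one, hp.2]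

theorem bellman_eq_add_sum_jobj (p : S → A → S → ℝ) (r : S → A → ℝ) (γ τ : ℝ)
    (πb π : S → A → ℝ) (q : S × A → ℝ) (sa : S × A) :
    bellman p r γ τ πb π q sa = r sa.1 sa.2 + γ * ∑ s', p sa.1 sa.2 s' * Jobj τ πb q π s' :=
  rfl

theorem bellman_sub_bellman (p : S → A → S → ℝ) (r : S → A → ℝ) (γ τ : ℝ)
    (πb π : S → A → ℝ) (q q' : S × A → ℝ) (sa : S × A) :
    bellman p r γ τ πb π q sa - bellman p r γ τ πb π q' sa =
      γ * ∑ sa', stateActionKernel p π sa sa' * (q sa' - q' sa') := by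
  simp only [bellman, stateActionKernel, Fintype.sum_prod_type, mul_assoc, ← Finset.mul_sum,
    mul_sub, Finset.sum_sub_distrib]
  ring

theorem bellman_le_bellman_of_jobj_le {p : S → A → S → ℝ} (hp : IsKernel p) (r : S → A → ℝ)
    {γ : ℝ} (hγ0 : 0 ≤ γ) (τ : ℝ) (πb : S → A → ℝ) {π π' : S → A → ℝ} {q : S × A → ℝ}
    (h : ∀ s, Jobj τ πb q π s ≤ Jobj τ πb q π' s) (sa : S × A) :
    bellman p r γ τ πb π q sa ≤ bellman p r γ τ πb π' q sa := by
  rw [bellman_eq_add_sum_jobj, bellman_eq_add_sum_jobj]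
  gcongr with s'
  exacts [hp.1 _ _ _, h s']

end Bellman

theorem stmt9_general {S A : Type*} [Fintype S] [Fintype A]
    (p : S → A → S → ℝ) (hp : IsKernel p)
    (r : S → A → ℝ) (γ τ : ℝ) (hγ0 : 0 ≤ γ) (hγ1 : γ < 1)
    (πb : S → A → ℝ)
    (πk : ℕ → S → A → ℝ) (hπk : ∀ k, IsPolicy (πk k))
    (qd : ℕ → S × A → ℝ) (hqd : ∀ k, bellman p r γ τ πb (πk k) (qd k) = qd k)
    (hmax : ∀ k, ∀ s : S, ∀ πt : S → A → ℝ, IsPolicy πt →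
      Jobj τ πb (qd k) πt s ≤ Jobj τ πb (qd k) (πk (k + 1)) s) :
    ∀ k, ∀ sa : S × A, qd k sa ≤ qd (k + 1) sa := by
  intro k
  set T := bellman p r γ τ πb (πk (k + 1))
  have himprove : ∀ sa, qd k sa ≤ T (qd k) sa := fun sa =>
    calc qd k sa = bellman p r γ τ πb (πk k) (qd k) sa := (congrFun (hqd k) sa).symm
      _ ≤ T (qd k) sa :=
        bellman_le_bellman_of_jobj_le hp r hγ0 τ πb (fun s => hmax k s _ (hπk k)) sa
  have hgap : ∀ sa, qd k sa - qd (k + 1) sa ≤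
      γ * ∑ sa', stateActionKernel p (πk (k + 1)) sa sa' * (qd k sa' - qd (k + 1) sa') :=
    fun sa =>
    calc qd k sa - qd (k + 1) sa ≤ T (qd k) sa - T (qd (k + 1)) sa := by
          linarith [himprove sa, congrFun (hqd (k + 1)) sa]
      _ = _ := bellman_sub_bellman p r γ τ πb _ _ _ sa
  intro sa
  exact sub_nonpos.mp <| le_zero_of_le_mul_stochastic_avg
    (stateActionKernel_nonneg hp (hπk (k + 1))) (sum_stateActionKernel hp (hπk (k + 1)))
    hγ0 hγ1 hgap sa

theorem stmt9 {S A : Type*} [Fintype S] [Fintype A] [Nonempty S] [Nonempty A]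
    (p : S → A → S → ℝ) (hp : IsKernel p)
    (r : S → A → ℝ) (γ τ : ℝ) (hγ0 : 0 ≤ γ) (hγ1 : γ < 1) (hτ : 0 ≤ τ)
    (πb : S → A → ℝ) (hπb : IsPolicy πb) (hπbpos : ∀ s a, 0 < πb s a)
    (πk : ℕ → S → A → ℝ) (hπk : ∀ k, IsPolicy (πk k))
    (qd : ℕ → S × A → ℝ) (hqd : ∀ k, bellman p r γ τ πb (πk k) (qd k) = qd k)
    (hmax : ∀ k, ∀ s : S, ∀ πt : S → A → ℝ, IsPolicy πt →
      Jobj τ πb (qd k) πt s ≤ Jobj τ πb (qd k) (πk (k + 1)) s) :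
    ∀ k, ∀ sa : S × A, qd k sa ≤ qd (k + 1) sa :=
  stmt9_general p hp r γ τ hγ0 hγ1 πb πk hπk qd hqd hmax
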